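/- For every positive integer N there exists a bijection g from the set of partitions with all parts ≤ N onto the Cartesian product of the set of strict partitions with all parts ≤ N and the set of partitions with all parts ≤ N in which every part occurs an even number of times, such that whenever g(λ) = (μ, ν): ℓ(λ) = ℓ(μ) + ℓ(ν), and each of the four statistics Σ_{i≥1}⌈λ_{2i−1}/2⌉, Σ_{i≥1}⌊λ_{2i−1}/2⌋, Σ_{i≥1}⌈λ_{2i}/2⌉, Σ_{i≥1}⌊λ_{2i}/2⌋ of λ equals the sum of the corresponding statistics of μ and of ν (equivalently, ω(λ) = ω(μ)·ω(ν) for all a,b,c,d in any commutative ring). -/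

import Mathlib

open scoped BigOperators

/-- A partition: a weakly decreasing sequence of nonnegative integers (0-indexed:
`parts i` is λ_{i+1}) with finitely many nonzero terms. -/
structure IntPartition where
  parts : ℕ → ℕ
  antitone : Antitone parts
  fin_support : ∃ N, ∀ n, N ≤ n → parts n = 0

namespace IntPartition

/-- Σ_{i≥1} ⌈λ_{2i-1}/2⌉ (odd-indexed rows, 1-based; ceiling). -/
noncomputable def statA (l : IntPartition) : ℕ := ∑ᶠ i : ℕ, (l.parts (2 * i) + 1) / 2
/-- Σ_{i≥1} ⌊λ_{2i-1}/2⌋. -/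
noncomputable def statB (l : IntPartition) : ℕ := ∑ᶠ i : ℕ, l.parts (2 * i) / 2
/-- Σ_{i≥1} ⌈λ_{2i}/2⌉. -/
noncomputable def statC (l : IntPartition) : ℕ := ∑ᶠ i : ℕ, (l.parts (2 * i + 1) + 1) / 2
/-- Σ_{i≥1} ⌊λ_{2i}/2⌋. -/
noncomputable def statD (l : IntPartition) : ℕ := ∑ᶠ i : ℕ, l.parts (2 * i + 1) / 2

/-- ℓ(λ): the number of nonzero parts. -/
noncomputable def length (l : IntPartition) : ℕ := Set.ncard (Function.support l.parts)

/-- |λ|: the sum of all parts. -/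
noncomputable def size (l : IntPartition) : ℕ := ∑ᶠ i : ℕ, l.parts i

/-- A partition is strict if its nonzero parts are pairwise distinct. -/
def Strict (l : IntPartition) : Prop := ∀ i, l.parts (i + 1) ≠ 0 → l.parts (i + 1) < l.parts i

/-- The Andrews–Stanley four-parameter weight ω(λ). -/
noncomputable def weight {R : Type*} [CommRing R] (a b c d : R) (l : IntPartition) : R :=
  a ^ l.statA * b ^ l.statB * c ^ l.statC * d ^ l.statD

/-- O(λ): the number of odd parts. -/
noncomputable def oddParts (l : IntPartition) : ℕ := Set.ncard {i : ℕ | Odd (l.parts i)}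

/-- O(λ'): the number of odd parts of the conjugate partition. -/
noncomputable def conjOddParts (l : IntPartition) : ℕ :=
  Set.ncard {j : ℕ | Odd (Set.ncard {i : ℕ | j + 1 ≤ l.parts i})}

end IntPartition

/-- The q-shifted factorial (x;q)_n. -/
def poch {R : Type*} [CommRing R] (x q : R) (n : ℕ) : R :=
  ∏ k ∈ Finset.range n, (1 - x * q ^ k)

/-- The infinite q-shifted factorial (x;q)_∞ (as an infinite product of reals). -/
noncomputable def pochInf (x q : ℝ) : ℝ := ∏' k : ℕ, (1 - x * q ^ k)

/-- The basic hypergeometric series ₂φ₁(α,β;γ;q,w). -/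
noncomputable def phi21 (α β γ q w : ℝ) : ℝ :=
  ∑' n : ℕ, poch α q n * poch β q n / (poch q q n * poch γ q n) * w ^ n

/-- Absolute convergence of the ₂φ₁ series. -/
def phi21Summable (α β γ q w : ℝ) : Prop :=
  Summable (fun n : ℕ => poch α q n * poch β q n / (poch q q n * poch γ q n) * w ^ n)

/-- The Gaussian binomial coefficient [N choose k]_q. -/
noncomputable def gauss {K : Type*} [Field K] (q : K) (N k : ℕ) : K :=
  poch q q N / (poch q q k * poch q q (N - k))

/-- Ψ_N(a,b,c,d;z): the generating function of strict partitions with parts ≤ N. -/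
noncomputable def Psi {R : Type*} [CommRing R] (a b c d z : R) (N : ℕ) : R :=
  ∑ᶠ μ : {μ : IntPartition // μ.Strict ∧ μ.parts 0 ≤ N},
    IntPartition.weight a b c d μ.1 * z ^ μ.1.length

/-!
Record a partition `λ` with parts `≤ N` by its multiplicities `m_k` and split each of them as
`m_k = (m_k mod 2) + 2 ⌊m_k / 2⌋`: the first terms give a strict partition `μ`, the second ones a
partition `ν` in which every part occurs an even number of times, and this is clearly invertible.
On conjugates it reads `λ' = μ' + ν'` with every `ν'_j` even. Counting the cells of the diagram
by columns, each of the four statistics is a sum of `⌊(λ'_j + ε) / 2⌋` over the columns `j` of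
one parity, and halving commutes with adding an even number; the length is `λ'_1`.
-/

namespace IntPartition

open Finset

theorem ext {l l' : IntPartition} (h : l.parts = l'.parts) : l = l' := by
  cases l; cases l'; congr

theorem parts_le_of_parts_zero_le {l : IntPartition} {N : ℕ} (hl : l.parts 0 ≤ N) (i : ℕ) :
    l.parts i ≤ N :=
  (l.antitone (Nat.zero_le i)).trans hl

/-- The `k`-th part `λ'_k` of the conjugate partition, for `k ≥ 1`. At `k = 0` the set is
infinite and the value is the junk `0`. -/
noncomputable def conjPart (l : IntPartition) (k : ℕ) : ℕ := Set.ncard {i | k ≤ l.parts i}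

theorem setOf_le_parts_eq_Iio (l : IntPartition) {k : ℕ} (hk : k ≠ 0) :
    ∃ n, {i | k ≤ l.parts i} = Set.Iio n := by
  have hex : ∃ n, l.parts n < k := by
    obtain ⟨B, hB⟩ := l.fin_support
    exact ⟨B, by rw [hB B le_rfl]; omega⟩
  refine ⟨Nat.find hex, Set.ext fun i => ?_⟩
  simp only [Set.mem_ofPred_eq, Set.mem_Iio]
  constructor
  · intro hi
    by_contra! h
    exact absurd ((l.antitone h).trans_lt (Nat.find_spec hex)) (not_lt.mpr hi)
  · intro hi
    exact not_lt.mp (Nat.find_min hex hi)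

theorem lt_conjPart_iff (l : IntPartition) {k : ℕ} (hk : k ≠ 0) (i : ℕ) :
    i < l.conjPart k ↔ k ≤ l.parts i := by
  obtain ⟨n, hn⟩ := l.setOf_le_parts_eq_Iio hk
  have : l.conjPart k = n := by rw [conjPart, hn, Set.ncard_Iio_nat]
  rw [this, ← Set.mem_Iio, ← hn, Set.mem_ofPred_eq]

theorem conjPart_anti (l : IntPartition) {a b : ℕ} (ha : a ≠ 0) (hab : a ≤ b) :
    l.conjPart b ≤ l.conjPart a :=
  le_of_forall_lt fun i hi =>
    (l.lt_conjPart_iff ha i).mpr (hab.trans ((l.lt_conjPart_iff (by omega) i).mp hi))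

theorem conjPart_eq_zero (l : IntPartition) {k : ℕ} (hk : l.parts 0 < k) : l.conjPart k = 0 := by
  by_contra h
  have := (l.lt_conjPart_iff (by omega) 0).mp (Nat.pos_of_ne_zero h)
  omega

theorem length_eq_conjPart_one (l : IntPartition) : l.length = l.conjPart 1 := by
  simp only [length, conjPart, Function.support, Nat.one_le_iff_ne_zero]

noncomputable def mult (l : IntPartition) (k : ℕ) : ℕ := l.conjPart k - l.conjPart (k + 1)

theorem ncard_parts_eq_mult (l : IntPartition) {k : ℕ} (hk : k ≠ 0) :
    {i | l.parts i = k}.ncard = l.mult k := by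
  have : {i | l.parts i = k} = ↑(Ico (l.conjPart (k + 1)) (l.conjPart k)) := by
    ext i
    have h₁ := l.lt_conjPart_iff hk i
    have h₂ := l.lt_conjPart_iff k.add_one_ne_zero i
    simp only [Set.mem_ofPred_eq, coe_Ico, Set.mem_Ico]
    omega
  rw [this, Set.ncard_coe_finset, Nat.card_Ico, mult]

theorem sum_Icc_mult_add_conjPart (l : IntPartition) {a n : ℕ} (han : a ≤ n) :
    ∑ j ∈ Icc (a + 1) n, l.mult j + l.conjPart (n + 1) = l.conjPart (a + 1) := by
  induction n, han using Nat.le_induction with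
  | base => simp
  | succ n han ih =>
    rw [sum_Icc_succ_top (by omega), add_assoc, mult,
      Nat.sub_add_cancel (l.conjPart_anti n.add_one_ne_zero (n + 1).le_succ), ih]

theorem sum_Icc_mult {l : IntPartition} {N k : ℕ} (hl : l.parts 0 ≤ N) (hk : k ≠ 0) :
    ∑ j ∈ Icc k N, l.mult j = l.conjPart k := by
  obtain ⟨a, rfl⟩ := Nat.exists_eq_succ_of_ne_zero hk
  rcases le_or_gt a N with haN | hNa
  · simpa [l.conjPart_eq_zero (Nat.lt_succ_of_le hl)] using l.sum_Icc_mult_add_conjPart haN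
  · rw [Icc_eq_empty (by omega), sum_empty, l.conjPart_eq_zero (by omega)]

theorem strict_iff_mult_le_one (l : IntPartition) : l.Strict ↔ ∀ k, k ≠ 0 → l.mult k ≤ 1 := by
  constructor
  · intro hs k hk
    by_contra! h
    set t := l.conjPart (k + 1)
    have hk_le : k ≤ l.parts (t + 1) := (l.lt_conjPart_iff hk _).mp (by unfold mult at h; omega)
    have hlt : l.parts t < k + 1 := by
      simpa using (l.lt_conjPart_iff k.add_one_ne_zero t).not.mp (lt_irrefl t)
    have := hs t (by omega)
    omega
  · intro hm i hi
    set p := l.parts (i + 1)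
    have h₁ : i + 1 < l.conjPart p := (l.lt_conjPart_iff hi _).mpr le_rfl
    have h₂ := hm p hi
    have h₃ : i < l.conjPart (p + 1) := by unfold mult at h₂; omega
    exact (l.lt_conjPart_iff p.add_one_ne_zero i).mp h₃

/-- The partition with `m k` parts equal to `k` for `1 ≤ k ≤ N`, given through its conjugate. -/
noncomputable def ofMult (N : ℕ) (m : ℕ → ℕ) : IntPartition where
  parts i := #{k ∈ Icc 1 N | i < ∑ j ∈ Icc k N, m j}
  antitone _ _ hij := card_le_card (monotone_filter_right _ fun _ _ h => lt_of_le_of_lt hij h)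
  fin_support := ⟨∑ j ∈ Icc 1 N, m j, fun _ hn => card_eq_zero.mpr <| filter_eq_empty_iff.mpr
    fun _ hk => not_lt.mpr <| le_trans (sum_le_sum_of_subset
      (Icc_subset_Icc_left (mem_Icc.mp hk).1)) hn⟩

theorem ofMult_parts (N : ℕ) (m : ℕ → ℕ) (i : ℕ) :
    (ofMult N m).parts i = #{k ∈ Icc 1 N | i < ∑ j ∈ Icc k N, m j} :=
  rfl

theorem ofMult_parts_zero_le (N : ℕ) (m : ℕ → ℕ) : (ofMult N m).parts 0 ≤ N := by
  simpa only [ofMult_parts, Nat.card_Icc, Nat.add_sub_cancel] using card_filter_le (Icc 1 N) _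

theorem le_ofMult_parts_iff (N : ℕ) (m : ℕ → ℕ) {k : ℕ} (hk : k ∈ Icc 1 N) (i : ℕ) :
    k ≤ (ofMult N m).parts i ↔ i < ∑ j ∈ Icc k N, m j := by
  have hanti {a b : ℕ} (hab : a ≤ b) : ∑ j ∈ Icc b N, m j ≤ ∑ j ∈ Icc a N, m j :=
    sum_le_sum_of_subset (Icc_subset_Icc_left hab)
  rw [mem_Icc] at hk
  rw [ofMult_parts]
  constructor
  · intro h
    by_contra! hki
    have hsub : {k' ∈ Icc 1 N | i < ∑ j ∈ Icc k' N, m j} ⊆ Icc 1 (k - 1) := fun k' hk' => by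
      rw [mem_filter, mem_Icc] at hk'
      rw [mem_Icc]
      by_contra hk'k
      exact absurd (hk'.2.trans_le (hanti (by omega : k ≤ k'))) (not_lt.mpr hki)
    have := card_le_card hsub
    simp only [Nat.card_Icc] at this
    omega
  · intro h
    have hsub : Icc 1 k ⊆ {k' ∈ Icc 1 N | i < ∑ j ∈ Icc k' N, m j} := fun k' hk' => by
      rw [mem_Icc] at hk'
      rw [mem_filter, mem_Icc]
      exact ⟨⟨hk'.1, hk'.2.trans hk.2⟩, h.trans_le (hanti hk'.2)⟩
    simpa using card_le_card hsub

theorem conjPart_ofMult (N : ℕ) (m : ℕ → ℕ) {k : ℕ} (hk : k ≠ 0) :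
    (ofMult N m).conjPart k = ∑ j ∈ Icc k N, m j := by
  rcases le_or_gt k N with hkN | hNk
  · exact eq_of_forall_lt_iff fun i => by
      rw [lt_conjPart_iff _ hk, le_ofMult_parts_iff N m (mem_Icc.mpr ⟨by omega, hkN⟩)]
  · rw [Icc_eq_empty (by omega), sum_empty]
    exact conjPart_eq_zero _ ((ofMult_parts_zero_le N m).trans_lt hNk)

theorem mult_ofMult (N : ℕ) (m : ℕ → ℕ) {k : ℕ} (hk : k ≠ 0) :
    (ofMult N m).mult k = if k ≤ N then m k else 0 := by
  rw [mult, conjPart_ofMult N m hk, conjPart_ofMult N m k.add_one_ne_zero]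
  split_ifs with hkN
  · rw [← add_sum_Ioc_eq_sum_Icc hkN, ← Icc_add_one_left_eq_Ioc, Nat.add_sub_cancel]
  · rw [Icc_eq_empty (by omega), Icc_eq_empty (by omega), sum_empty, Nat.sub_zero]

theorem ofMult_congr {N : ℕ} {m m' : ℕ → ℕ} (h : ∀ k ∈ Icc 1 N, m k = m' k) :
    ofMult N m = ofMult N m' := by
  refine ext (funext fun i => ?_)
  simp only [ofMult_parts]
  refine congrArg card (filter_congr fun k hk => ?_)
  rw [sum_congr rfl fun j hj => h j (Icc_subset_Icc_left (mem_Icc.mp hk).1 hj)]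

theorem ofMult_mult {l : IntPartition} {N : ℕ} (hl : l.parts 0 ≤ N) : ofMult N l.mult = l := by
  refine ext (funext fun i => ?_)
  rw [ofMult_parts]
  have : {k ∈ Icc 1 N | i < ∑ j ∈ Icc k N, l.mult j} = Icc 1 (l.parts i) := by
    ext k
    simp only [mem_filter, mem_Icc]
    constructor
    · rintro ⟨⟨hk1, -⟩, hk⟩
      exact ⟨hk1, (l.lt_conjPart_iff (by omega) i).mp (by rwa [sum_Icc_mult hl (by omega)] at hk)⟩
    · rintro ⟨hk1, hk⟩
      refine ⟨⟨hk1, hk.trans (parts_le_of_parts_zero_le hl i)⟩, ?_⟩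
      rw [sum_Icc_mult hl (by omega)]
      exact (l.lt_conjPart_iff (by omega) i).mpr hk
  rw [this, Nat.card_Icc, Nat.add_sub_cancel]

/-- `∑ᵢ ⌊(λ_{2i+o+1} + r) / 2⌋` in the 1-based indexing of `λ`: `statA`, `statB`, `statC`, `statD`
are the cases `(o, r) = (0, 1), (0, 0), (1, 1), (1, 0)`. -/
noncomputable def halfRowSum (l : IntPartition) (o r : ℕ) : ℕ :=
  ∑ᶠ i, (l.parts (2 * i + o) + r) / 2

theorem card_filter_two_mul_add_lt {B c o : ℕ} (hc : (c + 1 - o) / 2 ≤ B) :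
    #{i ∈ range B | 2 * i + o < c} = (c + 1 - o) / 2 := by
  rw [← card_range ((c + 1 - o) / 2)]
  congr 1
  ext i
  simp only [mem_filter, mem_range]
  omega

/-- Double counting, by columns instead of rows, the cells `(i, j)` of the diagram with
`i ≡ o` and `j ≡ r (mod 2)`, rows counted from `0` and columns from `1`. -/
theorem halfRowSum_eq_sum_conjPart {l : IntPartition} {N o r : ℕ} (hl : l.parts 0 ≤ N)
    (hr : r ≤ 1) :
    l.halfRowSum o r = ∑ t ∈ range ((N + r) / 2), (l.conjPart (2 * t + 2 - r) + 1 - o) / 2 := by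
  set L := l.conjPart 1
  have hsupp : Function.support (fun i => (l.parts (2 * i + o) + r) / 2) ⊆ ↑(range L) := by
    intro i hi
    rw [Function.mem_support] at hi
    have := (l.lt_conjPart_iff one_ne_zero (2 * i + o)).mpr (by omega)
    rw [coe_range, Set.mem_Iio]
    omega
  rw [halfRowSum, finsum_eq_sum_of_support_subset _ hsupp]
  calc ∑ i ∈ range L, (l.parts (2 * i + o) + r) / 2
      = ∑ i ∈ range L, #{t ∈ range ((N + r) / 2) | 2 * t + (1 - r) < l.parts (2 * i + o)} := by
        refine sum_congr rfl fun i _ => ?_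
        have := parts_le_of_parts_zero_le hl (2 * i + o)
        rw [card_filter_two_mul_add_lt (by omega)]
        congr 1
        omega
    _ = ∑ t ∈ range ((N + r) / 2), #{i ∈ range L | 2 * i + o < l.conjPart (2 * t + 2 - r)} := by
        simp only [card_filter]
        rw [sum_comm]
        refine sum_congr rfl fun t _ => sum_congr rfl fun i _ => ?_
        simp only [l.lt_conjPart_iff (by omega : 2 * t + 2 - r ≠ 0)]
        split_ifs <;> omega
    _ = _ := sum_congr rfl fun t _ => card_filter_two_mul_add_lt
        (by have := l.conjPart_anti one_ne_zero (by omega : 1 ≤ 2 * t + 2 - r); omega)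

theorem halfRowSum_add {l μ ν : IntPartition} {N o r : ℕ} (hl : l.parts 0 ≤ N)
    (hμ : μ.parts 0 ≤ N) (hν : ν.parts 0 ≤ N)
    (hconj : ∀ k, k ≠ 0 → l.conjPart k = μ.conjPart k + ν.conjPart k ∧ Even (ν.conjPart k))
    (ho : o ≤ 1) (hr : r ≤ 1) :
    l.halfRowSum o r = μ.halfRowSum o r + ν.halfRowSum o r := by
  rw [halfRowSum_eq_sum_conjPart hl hr, halfRowSum_eq_sum_conjPart hμ hr,
    halfRowSum_eq_sum_conjPart hν hr, ← sum_add_distrib]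
  refine sum_congr rfl fun t _ => ?_
  obtain ⟨hadd, s, hs⟩ := hconj (2 * t + 2 - r) (by omega)
  omega

noncomputable def strictPart (N : ℕ) (l : IntPartition) : IntPartition :=
  ofMult N fun k => l.mult k % 2

noncomputable def evenPart (N : ℕ) (l : IntPartition) : IntPartition :=
  ofMult N fun k => 2 * (l.mult k / 2)

theorem strict_strictPart (N : ℕ) (l : IntPartition) : (strictPart N l).Strict := by
  refine (strict_iff_mult_le_one _).mpr fun k hk => ?_
  rw [strictPart, mult_ofMult N _ hk]
  split_ifs <;> omega

theorem even_mult_evenPart (N : ℕ) (l : IntPartition) {k : ℕ} (hk : k ≠ 0) :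
    Even ((evenPart N l).mult k) := by
  rw [evenPart, mult_ofMult N _ hk]
  split_ifs
  exacts [even_two_mul _, .zero]

theorem conjPart_eq_strictPart_add_evenPart {N : ℕ} {l : IntPartition} (hl : l.parts 0 ≤ N)
    {k : ℕ} (hk : k ≠ 0) :
    l.conjPart k = (strictPart N l).conjPart k + (evenPart N l).conjPart k := by
  rw [strictPart, evenPart, conjPart_ofMult N _ hk, conjPart_ofMult N _ hk, ← sum_add_distrib,
    ← sum_Icc_mult hl hk]
  exact sum_congr rfl fun j _ => (Nat.mod_add_div _ _).symm

theorem even_conjPart_evenPart (N : ℕ) (l : IntPartition) {k : ℕ} (hk : k ≠ 0) :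
    Even ((evenPart N l).conjPart k) := by
  rw [evenPart, conjPart_ofMult N _ hk, ← mul_sum]
  exact even_two_mul _

theorem ofMult_mult_strictPart_add_mult_evenPart {N : ℕ} {l : IntPartition}
    (hl : l.parts 0 ≤ N) :
    ofMult N (fun k => (strictPart N l).mult k + (evenPart N l).mult k) = l := by
  refine (ofMult_congr fun k hk => ?_).trans (ofMult_mult hl)
  have hk₀ : k ≠ 0 := by rw [mem_Icc] at hk; omega
  rw [strictPart, evenPart, mult_ofMult N _ hk₀, mult_ofMult N _ hk₀, if_pos (mem_Icc.mp hk).2,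
    if_pos (mem_Icc.mp hk).2]
  exact Nat.mod_add_div _ _

theorem strictPart_ofMult_add {N : ℕ} {μ ν : IntPartition} (hμ : μ.Strict)
    (hν : ∀ k, k ≠ 0 → Even (ν.mult k)) (hμN : μ.parts 0 ≤ N) :
    strictPart N (ofMult N fun k => μ.mult k + ν.mult k) = μ := by
  refine (ofMult_congr fun k hk => ?_).trans (ofMult_mult hμN)
  have hk₀ : k ≠ 0 := by rw [mem_Icc] at hk; omega
  rw [mult_ofMult N _ hk₀, if_pos (mem_Icc.mp hk).2]
  have := (strict_iff_mult_le_one μ).mp hμ k hk₀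
  obtain ⟨s, hs⟩ := hν k hk₀
  omega

theorem evenPart_ofMult_add {N : ℕ} {μ ν : IntPartition} (hμ : μ.Strict)
    (hν : ∀ k, k ≠ 0 → Even (ν.mult k)) (hνN : ν.parts 0 ≤ N) :
    evenPart N (ofMult N fun k => μ.mult k + ν.mult k) = ν := by
  refine (ofMult_congr fun k hk => ?_).trans (ofMult_mult hνN)
  have hk₀ : k ≠ 0 := by rw [mem_Icc] at hk; omega
  rw [mult_ofMult N _ hk₀, if_pos (mem_Icc.mp hk).2]
  have := (strict_iff_mult_le_one μ).mp hμ k hk₀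
  obtain ⟨s, hs⟩ := hν k hk₀
  omega

noncomputable def bouletEquiv (N : ℕ) :
    {l : IntPartition // l.parts 0 ≤ N} ≃
      {m : IntPartition // m.Strict ∧ m.parts 0 ≤ N} ×
        {e : IntPartition // e.parts 0 ≤ N ∧
          ∀ k, 0 < k → Even (Set.ncard {i : ℕ | e.parts i = k})} where
  toFun l := (⟨strictPart N l, strict_strictPart N l, ofMult_parts_zero_le _ _⟩,
    ⟨evenPart N l, ofMult_parts_zero_le _ _, fun k hk => by
      rw [ncard_parts_eq_mult _ hk.ne']
      exact even_mult_evenPart N l hk.ne'⟩)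
  invFun p := ⟨ofMult N fun k => p.1.1.mult k + p.2.1.mult k, ofMult_parts_zero_le _ _⟩
  left_inv l := Subtype.ext (ofMult_mult_strictPart_add_mult_evenPart l.2)
  right_inv := by
    rintro ⟨⟨μ, hμ, hμN⟩, ⟨ν, hνN, hν⟩⟩
    have hν' (k : ℕ) (hk : k ≠ 0) : Even (ν.mult k) := by
      simpa only [ncard_parts_eq_mult ν hk] using hν k (Nat.pos_of_ne_zero hk)
    exact Prod.ext (Subtype.ext (strictPart_ofMult_add hμ hν' hμN))
      (Subtype.ext (evenPart_ofMult_add hμ hν' hνN))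

end IntPartition

open IntPartition in
theorem boulet_bijection_general (N : ℕ) :
    ∃ g : {l : IntPartition // l.parts 0 ≤ N} →
        {m : IntPartition // m.Strict ∧ m.parts 0 ≤ N} ×
          {e : IntPartition // e.parts 0 ≤ N ∧
            ∀ k, 0 < k → Even (Set.ncard {i : ℕ | e.parts i = k})},
      Function.Bijective g ∧
        ∀ l, l.1.length = (g l).1.1.length + (g l).2.1.length ∧
          l.1.statA = (g l).1.1.statA + (g l).2.1.statA ∧
          l.1.statB = (g l).1.1.statB + (g l).2.1.statB ∧
          l.1.statC = (g l).1.1.statC + (g l).2.1.statC ∧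
          l.1.statD = (g l).1.1.statD + (g l).2.1.statD := by
  refine ⟨bouletEquiv N, (bouletEquiv N).bijective, fun ⟨l, hl⟩ => ?_⟩
  have hconj (k : ℕ) (hk : k ≠ 0) : l.conjPart k =
      (strictPart N l).conjPart k + (evenPart N l).conjPart k ∧
        Even ((evenPart N l).conjPart k) :=
    ⟨conjPart_eq_strictPart_add_evenPart hl hk, even_conjPart_evenPart N l hk⟩
  have hstat (o r : ℕ) (ho : o ≤ 1) (hr : r ≤ 1) :=
    halfRowSum_add hl (ofMult_parts_zero_le _ _) (ofMult_parts_zero_le _ _) hconj ho hr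
  refine ⟨?_, hstat 0 1 zero_le_one le_rfl, hstat 0 0 zero_le_one zero_le_one,
    hstat 1 1 le_rfl le_rfl, hstat 1 0 le_rfl zero_le_one⟩
  simp only [length_eq_conjPart_one]
  exact (hconj 1 one_ne_zero).1

theorem boulet_bijection (N : ℕ) (hN : 1 ≤ N) :
    ∃ g : {l : IntPartition // l.parts 0 ≤ N} →
        {m : IntPartition // m.Strict ∧ m.parts 0 ≤ N} ×
          {e : IntPartition // e.parts 0 ≤ N ∧
            ∀ k, 0 < k → Even (Set.ncard {i : ℕ | e.parts i = k})},
      Function.Bijective g ∧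
        ∀ l, l.1.length = (g l).1.1.length + (g l).2.1.length ∧
          l.1.statA = (g l).1.1.statA + (g l).2.1.statA ∧
          l.1.statB = (g l).1.1.statB + (g l).2.1.statB ∧
          l.1.statC = (g l).1.1.statC + (g l).2.1.statC ∧
          l.1.statD = (g l).1.1.statD + (g l).2.1.statD :=
  boulet_bijection_general N
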